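/- Let c be a real number with 1 < c < 3 and c ≠ 2, let ε > 0 be fixed and sufficiently small, let P be sufficiently large and τ = P^{1-c-ε}. Then the number U of quadruples of integers (n1, n2, n3, n4) with P/2 < n1, n2, n3, n4 ≤ P and |[n1^c] + [n2^c] - [n3^c] - [n4^c]| ≤ 1/τ satisfies U ≪ P^3 + τ^{-1}·P^{4-c}. -/

import Mathlib

/-!
Fix `n₁, n₂, n₃`. Then `⌊n₄^c⌋` lies in an interval of length `2/τ`, so `n₄^c` lies in one of
length `2/τ + 1`. On `[P/2, P]` the derivative of `t ↦ t^c` is at least `c (P/2)^(c-1)`, hence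
`n₄` ranges over at most `(2/τ + 1) / (c (P/2)^(c-1)) + 1` integers. Summing over the `≤ P³`
triples gives `U ≪ P³ + (τ⁻¹ + 1) P^(4-c)`, and `P^(4-c) ≤ P³` because `c ≥ 1`.
-/

open scoped Classical
open Finset Real

/-- `quadU c P τ` counts integer quadruples `P/2 < n₁,n₂,n₃,n₄ ≤ P` with
`|[n₁^c] + [n₂^c] - [n₃^c] - [n₄^c]| ≤ 1/τ`. -/
noncomputable def quadU (c P τ : ℝ) : ℕ :=
  (((Finset.Ioc ⌊P / 2⌋₊ ⌊P⌋₊) ×ˢ (Finset.Ioc ⌊P / 2⌋₊ ⌊P⌋₊) ×ˢ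
      (Finset.Ioc ⌊P / 2⌋₊ ⌊P⌋₊) ×ˢ (Finset.Ioc ⌊P / 2⌋₊ ⌊P⌋₊)).filter
    (fun q => |((⌊(q.1 : ℝ) ^ c⌋ + ⌊(q.2.1 : ℝ) ^ c⌋ - ⌊(q.2.2.1 : ℝ) ^ c⌋ -
      ⌊(q.2.2.2 : ℝ) ^ c⌋ : ℤ) : ℝ)| ≤ 1 / τ)).card

lemma mul_rpow_sub_one_mul_sub_le_rpow_sub_rpow {c B x y : ℝ} (hc : 1 ≤ c) (hB : 0 < B)
    (hy : B ≤ y) (hxy : y ≤ x) : c * B ^ (c - 1) * (x - y) ≤ x ^ c - y ^ c := by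
  have hy0 : 0 < y := hB.trans_le hy
  have bernoulli := one_add_mul_self_le_rpow_one_add (s := x / y - 1)
    (by linarith [div_nonneg (hy0.le.trans hxy) hy0.le]) hc
  rw [add_sub_cancel, div_rpow (hy0.le.trans hxy) hy0.le, le_div_iff₀ (rpow_pos_of_pos hy0 c)]
    at bernoulli
  have expand : (1 + c * (x / y - 1)) * y ^ c = y ^ c + c * y ^ (c - 1) * (x - y) := by
    rw [rpow_sub_one hy0.ne']; field_simp
  calc c * B ^ (c - 1) * (x - y) ≤ c * y ^ (c - 1) * (x - y) := by gcongr
    _ ≤ x ^ c - y ^ c := by linarith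

lemma Finset.card_le_of_forall_sub_le {S : Finset ℕ} {D : ℝ} (hD : 0 ≤ D)
    (h : ∀ a ∈ S, ∀ b ∈ S, (b : ℝ) - a ≤ D) : (S.card : ℝ) ≤ D + 1 := by
  rcases S.eq_empty_or_nonempty with rfl | hS
  · simp only [card_empty, Nat.cast_zero]; linarith
  have hsub : S ⊆ Icc (S.min' hS) (S.max' hS) := fun x hx =>
    mem_Icc.mpr ⟨S.min'_le x hx, S.le_max' x hx⟩
  have hcard : S.card ≤ S.max' hS - S.min' hS + 1 := by
    have := card_le_card hsub
    rw [Nat.card_Icc] at this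
    omega
  calc (S.card : ℝ) ≤ ((S.max' hS - S.min' hS + 1 : ℕ) : ℝ) := by exact_mod_cast hcard
    _ = (S.max' hS : ℝ) - S.min' hS + 1 := by
        push_cast [Nat.cast_sub (S.min'_le _ (S.max'_mem hS))]; ring
    _ ≤ D + 1 := by gcongr; exact h _ (S.min'_mem hS) _ (S.max'_mem hS)

lemma sub_le_of_abs_sub_floor_rpow_le {c B r a b : ℝ} {K : ℤ} (hc : 1 ≤ c) (hB : 0 < B)
    (ha : B ≤ a) (hab : a ≤ b) (ha' : |((K - ⌊a ^ c⌋ : ℤ) : ℝ)| ≤ r)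
    (hb' : |((K - ⌊b ^ c⌋ : ℤ) : ℝ)| ≤ r) : b - a ≤ (2 * r + 1) / (c * B ^ (c - 1)) := by
  have hfloor : b ^ c - a ^ c ≤ 2 * r + 1 := by
    rw [abs_le] at ha' hb'
    push_cast at ha' hb'
    linarith [Int.lt_floor_add_one (b ^ c), Int.floor_le (a ^ c)]
  rw [le_div_iff₀ (by positivity)]
  linarith [mul_rpow_sub_one_mul_sub_le_rpow_sub_rpow hc hB ha hab]

lemma card_filter_abs_sub_floor_rpow_le {c B r : ℝ} (hc : 1 ≤ c) (hB : 0 < B) (hr : 0 ≤ r)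
    (K : ℤ) {S : Finset ℕ} (hS : ∀ n ∈ S, B ≤ n) :
    ((S.filter fun n : ℕ => |((K - ⌊(n : ℝ) ^ c⌋ : ℤ) : ℝ)| ≤ r).card : ℝ) ≤
      (2 * r + 1) / (c * B ^ (c - 1)) + 1 := by
  have hc0 : 0 < c := by linarith
  refine card_le_of_forall_sub_le (by positivity) fun a ha b hb => ?_
  rw [mem_filter] at ha hb
  rcases le_total (a : ℝ) b with hab | hba
  · exact sub_le_of_abs_sub_floor_rpow_le hc hB (hS a ha.1) hab ha.2 hb.2
  · have := sub_le_of_abs_sub_floor_rpow_le hc hB (hS b hb.1) hba hb.2 ha.2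
    linarith [show (0 : ℝ) ≤ (2 * r + 1) / (c * B ^ (c - 1)) by positivity]

lemma card_filter_product_four_le {α : Type*} (A : Finset α) (p : α × α × α × α → Prop)
    [DecidablePred p] {M : ℝ}
    (h : ∀ a ∈ A, ∀ b ∈ A, ∀ c ∈ A, ((A.filter fun d => p (a, b, c, d)).card : ℝ) ≤ M) :
    (((A ×ˢ A ×ˢ A ×ˢ A).filter p).card : ℝ) ≤ A.card ^ 3 * M := by
  have hsum : ((A ×ˢ A ×ˢ A ×ˢ A).filter p).card =
      ∑ a ∈ A, ∑ b ∈ A, ∑ c ∈ A, (A.filter fun d => p (a, b, c, d)).card := by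
    simp only [card_filter, sum_product]
  calc (((A ×ˢ A ×ˢ A ×ˢ A).filter p).card : ℝ)
      = ∑ a ∈ A, ∑ b ∈ A, ∑ c ∈ A, ((A.filter fun d => p (a, b, c, d)).card : ℝ) := by
        rw [hsum]; push_cast; rfl
    _ ≤ ∑ _a ∈ A, ∑ _b ∈ A, ∑ _c ∈ A, M := by
        gcongr with a ha b hb c hc
        exact h a ha b hb c hc
    _ = A.card ^ 3 * M := by simp only [sum_const, nsmul_eq_mul]; ring

lemma quadU_le_pow_three_mul {c P τ : ℝ} (hc : 1 ≤ c) (hP : 0 < P) (hτ : 0 < τ) :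
    (quadU c P τ : ℝ) ≤ P ^ 3 * ((2 * (1 / τ) + 1) / (c * (P / 2) ^ (c - 1)) + 1) := by
  set A := Ioc ⌊P / 2⌋₊ ⌊P⌋₊
  have hA : ∀ n ∈ A, P / 2 ≤ n := fun n hn =>
    ((Nat.floor_lt (by positivity)).mp (mem_Ioc.mp hn).1).le
  have hAcard : (A.card : ℝ) ≤ P := by
    calc (A.card : ℝ) ≤ ⌊P⌋₊ := by rw [Nat.card_Ioc]; exact_mod_cast Nat.sub_le _ _
      _ ≤ P := Nat.floor_le hP.le
  unfold quadU
  refine le_trans (card_filter_product_four_le A _ fun a _ b _ c' _ =>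
    card_filter_abs_sub_floor_rpow_le hc (by positivity) (by positivity)
      (⌊(a : ℝ) ^ c⌋ + ⌊(b : ℝ) ^ c⌋ - ⌊(c' : ℝ) ^ c⌋) hA) ?_
  gcongr

lemma quadU_le {c P τ : ℝ} (hc : 1 ≤ c) (hP : 1 ≤ P) (hτ : 0 < τ) :
    (quadU c P τ : ℝ) ≤ (1 + 2 ^ c / c) * (P ^ 3 + τ⁻¹ * P ^ (4 - c)) := by
  have hP0 : 0 < P := by linarith
  have hc0 : 0 < c := by linarith
  have hcube : P ^ 3 = P ^ (4 - c) * P ^ (c - 1) := by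
    rw [← rpow_add hP0, ← rpow_natCast]; norm_num
  have htwo : (2 : ℝ) ^ c = 2 * 2 ^ (c - 1) := by
    rw [← rpow_one_add' zero_le_two (by linarith)]; ring_nf
  have hY : 1 ≤ P ^ (c - 1) := one_le_rpow hP (by linarith)
  have hX : 0 < P ^ (4 - c) := rpow_pos_of_pos hP0 _
  have hu : 0 < (2 : ℝ) ^ (c - 1) := by positivity
  refine (quadU_le_pow_three_mul hc hP0 hτ).trans ?_
  rw [div_rpow hP0.le zero_le_two, hcube, htwo]
  field_simp
  nlinarith [mul_pos hX hu, mul_le_mul_of_nonneg_left hY (mul_pos hX hu).le, inv_pos.mpr hτ]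

theorem stmt_6_general (c : ℝ) (hc1 : 1 < c) :
    ∃ ε₀ > 0, ∀ ε : ℝ, 0 < ε → ε ≤ ε₀ →
      ∃ C > 0, ∃ P₀ : ℝ, ∀ P : ℝ, P₀ ≤ P →
        ∀ τ : ℝ, τ = P ^ (1 - c - ε) →
          (quadU c P τ : ℝ) ≤ C * (P ^ 3 + τ⁻¹ * P ^ (4 - c)) := by
  have hc0 : 0 < c := by linarith
  refine ⟨1, one_pos, fun ε _ _ => ⟨1 + 2 ^ c / c, by positivity, 1, fun P hP τ hτ => ?_⟩⟩
  exact quadU_le hc1.le hP (hτ ▸ rpow_pos_of_pos (by linarith) _)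

theorem stmt_6 (c : ℝ) (hc1 : 1 < c) (hc2 : c < 3) (hc3 : c ≠ 2) :
    ∃ ε₀ > 0, ∀ ε : ℝ, 0 < ε → ε ≤ ε₀ →
      ∃ C > 0, ∃ P₀ : ℝ, ∀ P : ℝ, P₀ ≤ P →
        ∀ τ : ℝ, τ = P ^ (1 - c - ε) →
          (quadU c P τ : ℝ) ≤ C * (P ^ 3 + τ⁻¹ * P ^ (4 - c)) :=
  stmt_6_general c hc1
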